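/- In the braid group B_n, with δ = σ_{n-1}σ_{n-2}⋯σ_1 and band generators a_{ts}, conjugation by δ shifts indices cyclically: δ^{-1} a_{ts} δ = a_{(t+1)(s+1)} for all n ≥ t > s ≥ 1, where indices are taken mod n (so a_{n s} δ-conjugates to a_{(s+1)1}). -/
import Mathlib

/-- Relators for the Artin presentation of the braid group `B n`.
Generator `i : Fin (n-1)` stands for the Artin generator `σ_{i+1}`. -/
def braidRels (n : ℕ) : Set (FreeGroup (Fin (n - 1))) :=
  {r | (∃ i j : Fin (n - 1), (i : ℕ) + 1 < (j : ℕ) ∧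
          r = FreeGroup.of i * FreeGroup.of j * (FreeGroup.of i)⁻¹ * (FreeGroup.of j)⁻¹) ∨
       (∃ i j : Fin (n - 1), (i : ℕ) + 1 = (j : ℕ) ∧
          r = FreeGroup.of i * FreeGroup.of j * FreeGroup.of i *
              (FreeGroup.of j * FreeGroup.of i * FreeGroup.of j)⁻¹)}

/-- The braid group on `n` strands, via the Artin presentation. -/
abbrev Braid (n : ℕ) := PresentedGroup (braidRels n)

/-- The Artin generator `σ_i` of `B n`, defined for `1 ≤ i ≤ n-1`
(junk value `1` out of range). -/
def sigma (n i : ℕ) : Braid n :=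
  if h : i - 1 < n - 1 ∧ 1 ≤ i then PresentedGroup.of ⟨i - 1, h.1⟩ else 1

/-- The band generator
`a_{ts} = (σ_{t-1} ⋯ σ_{s+1}) σ_s (σ_{s+1}⁻¹ ⋯ σ_{t-1}⁻¹)` for `n ≥ t > s ≥ 1`. -/
def band (n t s : ℕ) : Braid n :=
  (((List.range (t - 1 - s)).map (fun k => sigma n (t - 1 - k))).prod) * sigma n s *
    (((List.range (t - 1 - s)).map (fun k => sigma n (t - 1 - k))).prod)⁻¹

/-- The fundamental element `δ = σ_{n-1} σ_{n-2} ⋯ σ_1`. -/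
def delta (n : ℕ) : Braid n :=
  ((List.range (n - 1)).map (fun k => sigma n (n - 1 - k))).prod

/-! ### Auxiliary lemmas -/

lemma rel_one {n : ℕ} {r : FreeGroup (Fin (n-1))} (h : r ∈ braidRels n) :
    (QuotientGroup.mk r : Braid n) = 1 :=
  (QuotientGroup.eq_one_iff r).mpr (Subgroup.subset_normalClosure h)

lemma of_comm {n : ℕ} {i j : Fin (n-1)} (h : (i:ℕ)+1 < j) :
    (PresentedGroup.of i : Braid n) * PresentedGroup.of j
      = PresentedGroup.of j * PresentedGroup.of i := by
  have h1 := rel_one (n := n) (Or.inl ⟨i, j, h, rfl⟩)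
  simp only [QuotientGroup.mk_mul, QuotientGroup.mk_inv] at h1
  have h2 : (QuotientGroup.mk (FreeGroup.of i) : Braid n) * QuotientGroup.mk (FreeGroup.of j) *
      ((QuotientGroup.mk (FreeGroup.of j) : Braid n) * QuotientGroup.mk (FreeGroup.of i))⁻¹ = 1 := by
    rw [mul_inv_rev, ← mul_assoc]; exact h1
  exact mul_inv_eq_one.mp h2

lemma of_braid {n : ℕ} {i j : Fin (n-1)} (h : (i:ℕ)+1 = j) :
    (PresentedGroup.of i : Braid n) * PresentedGroup.of j * PresentedGroup.of i
      = PresentedGroup.of j * PresentedGroup.of i * PresentedGroup.of j := by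
  have h1 := rel_one (n := n) (Or.inr ⟨i, j, h, rfl⟩)
  simp only [QuotientGroup.mk_mul, QuotientGroup.mk_inv] at h1
  exact mul_inv_eq_one.mp h1

lemma sigma_eq {n : ℕ} (i : ℕ) (h1 : 1 ≤ i) (h2 : i ≤ n-1) :
    sigma n i = PresentedGroup.of ⟨i-1, by omega⟩ := by
  rw [sigma, dif_pos ⟨by omega, h1⟩]

lemma sigma_comm {n : ℕ} (i j : ℕ) (h1 : 1 ≤ i) (hij : i+1 < j) (h2 : j ≤ n-1) :
    sigma n i * sigma n j = sigma n j * sigma n i := by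
  rw [sigma_eq i h1 (by omega), sigma_eq j (by omega) h2]
  exact of_comm (by simp; omega)

lemma sigma_braid {n : ℕ} (i : ℕ) (h1 : 1 ≤ i) (h2 : i+1 ≤ n-1) :
    sigma n i * sigma n (i+1) * sigma n i = sigma n (i+1) * sigma n i * sigma n (i+1) := by
  rw [sigma_eq i h1 (by omega), sigma_eq (i+1) (by omega) h2]
  exact of_braid (by simp; omega)

/-- `D n m = σ_m σ_{m-1} ⋯ σ_1`. -/
def D (n m : ℕ) : Braid n := ((List.range m).map (fun k => sigma n (m - k))).prod

lemma D_zero {n : ℕ} : D n 0 = 1 := rfl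

lemma D_succ {n : ℕ} (m : ℕ) : D n (m+1) = sigma n (m+1) * D n m := by
  rw [D, D, List.range_succ_eq_map, List.map_cons, List.prod_cons, List.map_map]
  simp only [Function.comp_def, Nat.succ_sub_succ, Nat.sub_zero]

lemma sigma_comm_D {n : ℕ} (j m : ℕ) (hm : m + 1 < j) (hj : j ≤ n - 1) :
    sigma n j * D n m = D n m * sigma n j := by
  induction m with
  | zero => rw [D_zero, mul_one, one_mul]
  | succ m ih =>
    rw [D_succ, ← mul_assoc, ← sigma_comm (m+1) j (by omega) (by omega) hj,
      mul_assoc, ih (by omega), mul_assoc]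

lemma sigma_shift {n : ℕ} (i m : ℕ) (h1 : 1 ≤ i) (him : i < m) (hm : m ≤ n-1) :
    sigma n i * D n m = D n m * sigma n (i+1) := by
  induction m with
  | zero => omega
  | succ m ih =>
    rcases Nat.lt_or_ge i m with h | h
    · rw [D_succ, ← mul_assoc, sigma_comm i (m+1) h1 (by omega) hm, mul_assoc,
        ih h (by omega), mul_assoc]
    · have hi : i = m := by omega
      subst hi
      obtain ⟨j, rfl⟩ : ∃ j, i = j + 1 := ⟨i - 1, by omega⟩
      rw [D_succ, D_succ, ← mul_assoc, ← mul_assoc, ← mul_assoc,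
        sigma_braid (j+1) (by omega) hm, mul_assoc, mul_assoc,
        sigma_comm_D (j+2) j (by omega) hm, ← mul_assoc, ← mul_assoc]

lemma delta_eq_D {n : ℕ} : delta n = D n (n-1) := rfl

lemma delta_conj_sigma {n : ℕ} (i : ℕ) (h1 : 1 ≤ i) (h2 : i ≤ n-2) :
    (delta n)⁻¹ * sigma n i * delta n = sigma n (i+1) := by
  rw [delta_eq_D, mul_assoc, sigma_shift i (n-1) h1 (by omega) le_rfl,
    ← mul_assoc, inv_mul_cancel, one_mul]

lemma D_split {n : ℕ} (m j : ℕ) (h : j ≤ m) :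
    D n m = ((List.range (m - j)).map (fun k => sigma n (m - k))).prod * D n j := by
  rw [D, D]
  conv_lhs => rw [show m = (m - j) + j by omega, List.range_add]
  rw [List.map_append, List.prod_append, List.map_map]
  congr 2
  · rw [show (m - j) + j = m by omega]
  · apply List.map_congr_left
    intro a ha
    simp only [Function.comp_def]
    congr 1
    simp only [List.mem_range] at ha
    omega

lemma D_pull {n : ℕ} (s m : ℕ) (hm : m + 1 ≤ s) (hs : s ≤ n - 1) :
    D n s * ((List.range m).map (fun k => sigma n (s - k))).prod
      = ((List.range m).map (fun k => sigma n (s - 1 - k))).prod * D n s := by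
  induction m with
  | zero => simp
  | succ m ih =>
    rw [List.range_succ, List.map_append, List.map_append, List.prod_append,
      List.prod_append, ← mul_assoc, ih (by omega)]
    simp only [List.map_cons, List.map_nil, List.prod_cons, List.prod_nil, mul_one]
    rw [mul_assoc, show s - m = (s - 1 - m) + 1 by omega,
      ← sigma_shift (s-1-m) s (by omega) (by omega) hs, ← mul_assoc]

lemma conj_prod_map {n : ℕ} (g : Braid n) (m : ℕ) (f f' : ℕ → Braid n)
    (h : ∀ k < m, g⁻¹ * f k * g = f' k) :
    g⁻¹ * ((List.range m).map f).prod * g = ((List.range m).map f').prod := by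
  induction m with
  | zero => simp
  | succ m ih =>
    rw [List.range_succ, List.map_append, List.map_append, List.prod_append, List.prod_append]
    simp only [List.map_cons, List.map_nil, List.prod_cons, List.prod_nil, mul_one]
    have hih := ih (fun k hk => h k (by omega))
    calc g⁻¹ * (((List.range m).map f).prod * f m) * g
        = (g⁻¹ * ((List.range m).map f).prod * g) * (g⁻¹ * f m * g) := by group
      _ = ((List.range m).map f').prod * f' m := by rw [hih, h m (by omega)]

/-! ### Main theorem -/

/-- conjugation by `δ` shifts the indices of the band generators
cyclically mod `n`: `δ⁻¹ a_{ts} δ = a_{(t+1)(s+1)}`, where for `t = n` the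
shifted generator is `a_{(s+1)1}` (indices mod `n`, and `a_{uv} = a_{vu}`). -/
theorem delta_conj_band (n t s : ℕ)
    (hs : 1 ≤ s) (hst : s < t) (htn : t ≤ n) :
    (delta n)⁻¹ * band n t s * delta n =
      if t = n then band n (s + 1) 1 else band n (t + 1) (s + 1) := by
  split_ifs with ht
  · -- case t = n
    subst ht
    obtain ⟨m, rfl⟩ : ∃ m, s = m + 1 := ⟨s - 1, by omega⟩
    set A : Braid t := ((List.range (t - 1 - (m+1))).map (fun k => sigma t (t - 1 - k))).prod
      with hAdef
    set P : Braid t := ((List.range m).map (fun k => sigma t (m + 1 - k))).prod with hPdef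
    have hbandL : band t t (m+1) = A * sigma t (m+1) * A⁻¹ := rfl
    have hbandR : band t (m+1+1) 1 = P * sigma t 1 * P⁻¹ := rfl
    have hA : delta t = A * D t (m+1) := D_split (t-1) (m+1) (by omega)
    have hpull : D t (m+1) * P = D t m * D t (m+1) := D_pull (m+1) m (by omega) (by omega)
    have hDs : D t (m+1) = sigma t (m+1) * D t m := D_succ m
    have hP1 : P * sigma t 1 = D t (m+1) := by
      have h0 : D t (m+1) = P * sigma t (m+1-m) := by
        rw [D, List.range_succ, List.map_append, List.prod_append]
        simp [hPdef]
      rw [show m+1-m = 1 by omega] at h0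
      exact h0.symm
    have h2 : sigma t (m+1) * (D t (m+1) * P) = D t (m+1) * (P * sigma t 1) := by
      rw [hpull, hP1, ← mul_assoc, ← hDs]
    have h3 : sigma t (m+1) * D t (m+1) = D t (m+1) * (P * sigma t 1 * P⁻¹) := by
      calc sigma t (m+1) * D t (m+1)
          = sigma t (m+1) * (D t (m+1) * P) * P⁻¹ := by group
        _ = D t (m+1) * (P * sigma t 1) * P⁻¹ := by rw [h2]
        _ = D t (m+1) * (P * sigma t 1 * P⁻¹) := by group
    have key : band t t (m+1) * delta t = delta t * band t (m+1+1) 1 := by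
      rw [hbandL, hbandR, hA]
      calc A * sigma t (m+1) * A⁻¹ * (A * D t (m+1))
          = A * (sigma t (m+1) * D t (m+1)) := by group
        _ = A * (D t (m+1) * (P * sigma t 1 * P⁻¹)) := by rw [h3]
        _ = A * D t (m+1) * (P * sigma t 1 * P⁻¹) := by group
    rw [mul_assoc, key, ← mul_assoc, inv_mul_cancel, one_mul]
  · -- case t < n
    have htn' : t ≤ n - 1 := by omega
    set W : Braid n := ((List.range (t - 1 - s)).map (fun k => sigma n (t - 1 - k))).prod
      with hWdef
    set W' : Braid n := ((List.range (t - 1 - s)).map (fun k => sigma n (t - k))).prod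
      with hW'def
    have hbandL : band n t s = W * sigma n s * W⁻¹ := rfl
    have hbandR : band n (t+1) (s+1) = W' * sigma n (s+1) * W'⁻¹ := by
      rw [band, show t+1-1-(s+1) = t-1-s by omega]
      rfl
    have hσ : ∀ k < t-1-s, (delta n)⁻¹ * sigma n (t-1-k) * delta n = sigma n (t-k) := by
      intro k hk
      rw [show t-k = (t-1-k)+1 by omega]
      exact delta_conj_sigma (t-1-k) (by omega) (by omega)
    have hW : (delta n)⁻¹ * W * delta n = W' :=
      conj_prod_map (delta n) (t-1-s) _ _ hσ
    have hs' : (delta n)⁻¹ * sigma n s * delta n = sigma n (s+1) :=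
      delta_conj_sigma s hs (by omega)
    rw [hbandL, hbandR]
    calc (delta n)⁻¹ * (W * sigma n s * W⁻¹) * delta n
        = ((delta n)⁻¹ * W * delta n) * ((delta n)⁻¹ * sigma n s * delta n) *
            ((delta n)⁻¹ * W * delta n)⁻¹ := by group
      _ = W' * sigma n (s+1) * W'⁻¹ := by rw [hW, hs']
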